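/- arXiv:1809.07192 — 3 statements merged into one kernel-verified Lean document; each statement's English description precedes it below -/
import Mathlib

section
/- Let Ω be a finite probability space, M ≥ 2, and X_1, …, X_M random variables with X_i taking values in a finite type A_i, such that the joint probability P(X_1 = x_1, …, X_M = x_M) is strictly positive for every tuple (x_1, …, x_M) ∈ A_1 × ⋯ × A_M. Let Θ : {2, …, M} → {1, …, M} be a parent assignment, and define the tree-structured approximation q(x_1, …, x_M) = P(X_1 = x_1) · ∏_{i=2}^{M} P(X_i = x_i ∣ X_{Θ(i)} = x_{Θ(i)}). Then the Kullback–Leibler divergence D(p‖q) = Σ_x P(X = x) · log( P(X = x) / q(x) ) satisfies D(p‖q) = Σ_{i=1}^{M} H(X_i) − H(X_1, …, X_M) − Σ_{i=2}^{M} I(X_i ; X_{Θ(i)}). -/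
/-!
Evaluating each expectation as a sum over the sample space, the divergence is the expectation of
`log (p(x) / q(x))`, which splits pointwise as
`log p(x) - ∑ᵢ log p(xᵢ) - ∑_{i ≠ r} log (p(xᵢ, x_{Θ i}) / (p(xᵢ) p(x_{Θ i})))`;
the three expectations are `-H(X)`, `-∑ᵢ H(Xᵢ)` and the mutual informations. The logarithms are
legitimate because every marginal probability is a sum of (positive) joint probabilities.
-/

open scoped Classical

/-- Probability of an event `p` under the pmf `w` on a finite sample space. -/
noncomputable def pr {Ω : Type*} [Fintype Ω] (w : Ω → ℝ) (p : Ω → Prop) : ℝ :=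
  ∑ ω : Ω, if p ω then w ω else 0

/-- Mutual information `I(X;Y)` (terms with zero joint probability vanish since `0 * log _ = 0`). -/
noncomputable def mutualInfo {Ω A B : Type*} [Fintype Ω] [Fintype A] [Fintype B]
    (w : Ω → ℝ) (X : Ω → A) (Y : Ω → B) : ℝ :=
  ∑ a : A, ∑ b : B,
    pr w (fun ω => X ω = a ∧ Y ω = b) *
      Real.log (pr w (fun ω => X ω = a ∧ Y ω = b) /
        (pr w (fun ω => X ω = a) * pr w (fun ω => Y ω = b)))

/-- Entropy `H(X)` (terms with zero probability vanish since `0 * log 0 = 0`). -/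
noncomputable def entropy {Ω A : Type*} [Fintype Ω] [Fintype A]
    (w : Ω → ℝ) (X : Ω → A) : ℝ :=
  -∑ a : A, pr w (fun ω => X ω = a) * Real.log (pr w (fun ω => X ω = a))

section Probability

variable {Ω : Type*} [Fintype Ω] (w : Ω → ℝ)

lemma sum_pr_mul_eq_sum_mul {B : Type*} [Fintype B] (Z : Ω → B) (f : B → ℝ) :
    ∑ b, pr w (fun ω => Z ω = b) * f b = ∑ ω, w ω * f (Z ω) := by
  simp only [pr, Finset.sum_mul, ite_mul, zero_mul]
  rw [Finset.sum_comm]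
  exact Finset.sum_congr rfl fun ω _ => by simp

lemma pr_comp_eq_sum {B : Type*} [Fintype B] (Z : Ω → B) (q : B → Prop) :
    pr w (fun ω => q (Z ω)) = ∑ b ∈ Finset.univ.filter q, pr w (fun ω => Z ω = b) := by
  have h := sum_pr_mul_eq_sum_mul w Z (fun b => if q b then 1 else 0)
  simp only [mul_ite, mul_one, mul_zero, Finset.sum_ite, Finset.sum_const_zero,
    add_zero] at h
  rw [h, pr]
  simp only [Finset.sum_filter]

lemma pr_comp_pos {B : Type*} [Fintype B] {Z : Ω → B}
    (hZ : ∀ b, 0 < pr w (fun ω => Z ω = b)) {q : B → Prop} {b : B} (hb : q b) :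
    0 < pr w (fun ω => q (Z ω)) := by
  rw [pr_comp_eq_sum]
  exact Finset.sum_pos (fun b _ => hZ b) ⟨b, Finset.mem_filter.2 ⟨Finset.mem_univ b, hb⟩⟩

lemma entropy_eq_sum {A : Type*} [Fintype A] (X : Ω → A) :
    entropy w X = -∑ ω, w ω * Real.log (pr w (fun ω' => X ω' = X ω)) := by
  rw [entropy, sum_pr_mul_eq_sum_mul w X (fun a => Real.log (pr w (fun ω' => X ω' = a)))]

lemma mutualInfo_eq_sum {A B : Type*} [Fintype A] [Fintype B] (X : Ω → A) (Y : Ω → B) :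
    mutualInfo w X Y = ∑ ω, w ω *
      Real.log (pr w (fun ω' => X ω' = X ω ∧ Y ω' = Y ω) /
        (pr w (fun ω' => X ω' = X ω) * pr w (fun ω' => Y ω' = Y ω))) := by
  rw [mutualInfo, ← Fintype.sum_prod_type', ← sum_pr_mul_eq_sum_mul w (fun ω => (X ω, Y ω))
    (fun ab => Real.log (pr w (fun ω' => X ω' = ab.1 ∧ Y ω' = ab.2) /
      (pr w (fun ω' => X ω' = ab.1) * pr w (fun ω' => Y ω' = ab.2))))]
  simp only [Prod.ext_iff]

end Probability

section Tree

variable {ι : Type*} [Fintype ι] [DecidableEq ι]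

lemma log_div_mul_prod_div (r : ι) (Θ : ι → ι) {p : ℝ} {Q R : ι → ℝ} (hp : 0 < p)
    (hQ : ∀ i, 0 < Q i) (hR : ∀ i, 0 < R i) :
    Real.log (p / (Q r * ∏ i ∈ Finset.univ.filter (fun i => i ≠ r), R i / Q (Θ i)))
      = Real.log p - ∑ i, Real.log (Q i)
        - ∑ i ∈ Finset.univ.filter (fun i => i ≠ r), Real.log (R i / (Q i * Q (Θ i))) := by
  have hprod : Q r * ∏ i ∈ Finset.univ.filter (fun i => i ≠ r), R i / Q (Θ i)
      = (∏ i, Q i) * ∏ i ∈ Finset.univ.filter (fun i => i ≠ r), R i / (Q i * Q (Θ i)) := by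
    rw [Finset.filter_ne', ← Finset.mul_prod_erase Finset.univ Q (Finset.mem_univ r), mul_assoc,
      ← Finset.prod_mul_distrib]
    congr 1
    refine Finset.prod_congr rfl fun i _ => ?_
    field_simp [(hQ i).ne']
  have hR' : ∀ i, R i / (Q i * Q (Θ i)) ≠ 0 := fun i =>
    (div_pos (hR i) (mul_pos (hQ i) (hQ _))).ne'
  have hQprod : ∏ i, Q i ≠ 0 := Finset.prod_ne_zero_iff.2 fun i _ => (hQ i).ne'
  have hRprod : ∏ i ∈ Finset.univ.filter (fun i => i ≠ r), R i / (Q i * Q (Θ i)) ≠ 0 :=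
    Finset.prod_ne_zero_iff.2 fun i _ => hR' i
  rw [hprod, Real.log_div hp.ne' (mul_ne_zero hQprod hRprod), Real.log_mul hQprod hRprod,
    Real.log_prod fun i _ => (hQ i).ne', Real.log_prod fun i _ => hR' i]
  ring

variable {Ω : Type*} [Fintype Ω] {A : ι → Type*} [∀ i, Fintype (A i)]

noncomputable def treeApprox (w : Ω → ℝ) (X : ∀ i, Ω → A i) (Θ : ι → ι) (r : ι)
    (x : ∀ i, A i) : ℝ :=
  pr w (fun ω => X r ω = x r) *
    ∏ i ∈ Finset.univ.filter (fun i => i ≠ r),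
      pr w (fun ω => X i ω = x i ∧ X (Θ i) ω = x (Θ i)) / pr w (fun ω => X (Θ i) ω = x (Θ i))

theorem sum_pr_mul_log_div_treeApprox (w : Ω → ℝ) (X : ∀ i, Ω → A i)
    (hpos : ∀ x : ∀ i, A i, 0 < pr w (fun ω => ∀ i, X i ω = x i)) (Θ : ι → ι) (r : ι) :
    ∑ x : ∀ i, A i, pr w (fun ω => ∀ i, X i ω = x i) *
        Real.log (pr w (fun ω => ∀ i, X i ω = x i) / treeApprox w X Θ r x)
      = (∑ i, entropy w (X i)) - entropy w (fun ω i => X i ω)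
        - ∑ i ∈ Finset.univ.filter (fun i => i ≠ r), mutualInfo w (X i) (X (Θ i)) := by
  have hfibre : ∀ x, 0 < pr w (fun ω => (fun i => X i ω) = x) := fun x => by
    simpa only [funext_iff] using hpos x
  have hjoint : entropy w (fun ω i => X i ω)
      = -∑ ω, w ω * Real.log (pr w (fun ω' => ∀ i, X i ω' = X i ω)) := by
    simp only [entropy_eq_sum, funext_iff]
  calc _ = ∑ ω, w ω * Real.log (pr w (fun ω' => ∀ i, X i ω' = X i ω)
          / treeApprox w X Θ r (fun i => X i ω)) := by
        rw [← sum_pr_mul_eq_sum_mul w (fun ω i => X i ω)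
          (fun x => Real.log (pr w (fun ω => ∀ i, X i ω = x i) / treeApprox w X Θ r x))]
        simp only [funext_iff]
    _ = ∑ ω, w ω * (Real.log (pr w (fun ω' => ∀ i, X i ω' = X i ω))
          - ∑ i, Real.log (pr w (fun ω' => X i ω' = X i ω))
          - ∑ i ∈ Finset.univ.filter (fun i => i ≠ r),
              Real.log (pr w (fun ω' => X i ω' = X i ω ∧ X (Θ i) ω' = X (Θ i) ω) /
                (pr w (fun ω' => X i ω' = X i ω) * pr w (fun ω' => X (Θ i) ω' = X (Θ i) ω)))) :=
        Finset.sum_congr rfl fun ω _ => by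
          rw [treeApprox, log_div_mul_prod_div r Θ (hpos _)
            (fun i => pr_comp_pos w hfibre (q := fun x => x i = X i ω) (b := fun j => X j ω) rfl)
            (fun i => pr_comp_pos w hfibre
              (q := fun x => x i = X i ω ∧ x (Θ i) = X (Θ i) ω) (b := fun j => X j ω) ⟨rfl, rfl⟩)]
    _ = _ := by
      simp only [hjoint, entropy_eq_sum, mutualInfo_eq_sum, mul_sub, Finset.sum_sub_distrib,
        Finset.mul_sum, Finset.sum_neg_distrib]
      rw [Finset.sum_comm (s := Finset.univ.filter fun i => i ≠ r),
        Finset.sum_comm (s := (Finset.univ : Finset ι)) (t := (Finset.univ : Finset Ω))]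
      ring

end Tree

/-- For a strictly positive joint distribution of `X_1, …, X_M` (indexed here by
`Fin M`, with index `0` playing the role of `X_1`) and a parent assignment `Θ` on the non-root
nodes, the KL divergence between the joint distribution and the tree-structured approximation
`q(x) = P(X_0 = x_0) ∏_{i ≠ 0} P(X_i = x_i ∣ X_{Θ i} = x_{Θ i})` equals
`∑_i H(X_i) − H(X_1, …, X_M) − ∑_{i ≠ 0} I(X_i ; X_{Θ i})`. -/
theorem kl_tree_approximation_eq
    {Ω : Type*} [Fintype Ω] (w : Ω → ℝ)
    (M : ℕ) (hM : 2 ≤ M)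
    (A : Fin M → Type*) [∀ i, Fintype (A i)]
    (X : ∀ i, Ω → A i)
    (hpos : ∀ x : ∀ i, A i, 0 < pr w (fun ω => ∀ i, X i ω = x i))
    (Θ : Fin M → Fin M) :
    (∑ x : ∀ i, A i,
        pr w (fun ω => ∀ i, X i ω = x i) *
          Real.log (pr w (fun ω => ∀ i, X i ω = x i) /
            (pr w (fun ω => X ⟨0, by omega⟩ ω = x ⟨0, by omega⟩) *
              ∏ i ∈ Finset.univ.filter (fun i : Fin M => i ≠ ⟨0, by omega⟩),
                pr w (fun ω => X i ω = x i ∧ X (Θ i) ω = x (Θ i)) /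
                  pr w (fun ω => X (Θ i) ω = x (Θ i)))))
      = (∑ i : Fin M, entropy w (X i)) - entropy w (fun ω => fun i => X i ω)
          - ∑ i ∈ Finset.univ.filter (fun i : Fin M => i ≠ ⟨0, by omega⟩),
              mutualInfo w (X i) (X (Θ i)) :=
  sum_pr_mul_log_div_treeApprox w X hpos Θ ⟨0, by omega⟩
end

section
/- Let Ω be a finite probability space and let X_i, X_k, X_l be random variables taking values in finite types. If X_k and X_l are conditionally independent given X_i, then I(X_i ; X_k) ≥ I(X_k ; X_l); that is, the mutual information between the two variables joined through X_i is at least the mutual information between the two endpoint variables. -/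
open scoped Classical

/-- Conditional mutual information `I(X;Y∣Z)` (zero-probability terms vanish). -/
noncomputable def condMutualInfo {Ω A B C : Type*} [Fintype Ω] [Fintype A] [Fintype B] [Fintype C]
    (w : Ω → ℝ) (X : Ω → A) (Y : Ω → B) (Z : Ω → C) : ℝ :=
  ∑ a : A, ∑ b : B, ∑ c : C,
    pr w (fun ω => X ω = a ∧ Y ω = b ∧ Z ω = c) *
      Real.log (pr w (fun ω => Z ω = c) * pr w (fun ω => X ω = a ∧ Y ω = b ∧ Z ω = c) /
        (pr w (fun ω => X ω = a ∧ Z ω = c) * pr w (fun ω => Y ω = b ∧ Z ω = c)))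

/-- `X` and `Y` are conditionally independent given `Z`. -/
def CondIndep {Ω A B C : Type*} [Fintype Ω] [Fintype A] [Fintype B] [Fintype C]
    (w : Ω → ℝ) (X : Ω → A) (Y : Ω → B) (Z : Ω → C) : Prop :=
  ∀ (a : A) (b : B) (c : C),
    pr w (fun ω => X ω = a ∧ Y ω = b ∧ Z ω = c) * pr w (fun ω => Z ω = c) =
      pr w (fun ω => X ω = a ∧ Z ω = c) * pr w (fun ω => Y ω = b ∧ Z ω = c)

section helpers
variable {Ω : Type*} [Fintype Ω] (w : Ω → ℝ)

lemma pr_nonneg (hw0 : ∀ ω, 0 ≤ w ω) (p : Ω → Prop) : 0 ≤ pr w p := by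
  apply Finset.sum_nonneg; intro ω _; split <;> simp [hw0 ω]

lemma pr_congr {p q : Ω → Prop} (h : ∀ ω, p ω ↔ q ω) : pr w p = pr w q := by
  unfold pr; apply Finset.sum_congr rfl; intro ω _; simp [h ω]

lemma pr_mono (hw0 : ∀ ω, 0 ≤ w ω) {p q : Ω → Prop} (h : ∀ ω, p ω → q ω) :
    pr w p ≤ pr w q := by
  apply Finset.sum_le_sum; intro ω _
  by_cases hp : p ω
  · simp [hp, h ω hp]
  · simp only [hp, if_false]; split <;> simp [hw0 ω]

lemma pr_marg {D : Type*} [Fintype D] (p : Ω → Prop) (Z : Ω → D) :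
    pr w p = ∑ d : D, pr w (fun ω => p ω ∧ Z ω = d) := by
  unfold pr
  rw [Finset.sum_comm]
  apply Finset.sum_congr rfl; intro ω _
  by_cases hp : p ω
  · simp only [hp, true_and, if_true]
    rw [Finset.sum_ite_eq Finset.univ (Z ω) (fun _ => w ω)]
    simp
  · simp [hp]

/-- The key pointwise inequality, stated for abstract reals. -/
lemma key_ineq (x pik pil pkl pi pk pl : ℝ) (hx0 : 0 ≤ x)
    (hpik : x ≤ pik) (hpil : x ≤ pil) (hpkl : x ≤ pkl)
    (hpi : x ≤ pi) (hpk : x ≤ pk) (hpl : x ≤ pl)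
    (hpil0 : 0 ≤ pil) (hpkl0 : 0 ≤ pkl) (hpl0 : 0 ≤ pl)
    (hci : x * pi = pik * pil) :
    x - pil * pkl / pl ≤
      x * Real.log (pik / (pi * pk)) - x * Real.log (pkl / (pk * pl)) := by
  rcases eq_or_lt_of_le hx0 with h0 | hx
  · rw [← h0]
    have : 0 ≤ pil * pkl / pl := by positivity
    simp; linarith
  · have hpik' : 0 < pik := lt_of_lt_of_le hx hpik
    have hpil' : 0 < pil := lt_of_lt_of_le hx hpil
    have hpkl' : 0 < pkl := lt_of_lt_of_le hx hpkl
    have hpi' : 0 < pi := lt_of_lt_of_le hx hpi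
    have hpk' : 0 < pk := lt_of_lt_of_le hx hpk
    have hpl' : 0 < pl := lt_of_lt_of_le hx hpl
    set y : ℝ := pil * pkl / pl with hy
    have hy' : 0 < y := by positivity
    have e1 : Real.log (pik / (pi * pk)) =
        Real.log pik - (Real.log pi + Real.log pk) := by
      rw [Real.log_div hpik'.ne' (by positivity), Real.log_mul hpi'.ne' hpk'.ne']
    have e2 : Real.log (pkl / (pk * pl)) =
        Real.log pkl - (Real.log pk + Real.log pl) := by
      rw [Real.log_div hpkl'.ne' (by positivity), Real.log_mul hpk'.ne' hpl'.ne']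
    have e3 : Real.log y = Real.log pil + Real.log pkl - Real.log pl := by
      rw [hy, Real.log_div (by positivity) hpl'.ne', Real.log_mul hpil'.ne' hpkl'.ne']
    have e4 : Real.log x + Real.log pi = Real.log pik + Real.log pil := by
      rw [← Real.log_mul hx.ne' hpi'.ne', ← Real.log_mul hpik'.ne' hpil'.ne', hci]
    have hls : Real.log y - Real.log x ≤ y / x - 1 := by
      have := Real.log_le_sub_one_of_pos (show (0:ℝ) < y / x by positivity)
      rwa [Real.log_div hy'.ne' hx.ne'] at this
    have hmul : x * (Real.log y - Real.log x) ≤ y - x := by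
      have hxe : x * (y / x - 1) = y - x := by field_simp
      nlinarith [hls, hx]
    have hlog : Real.log (pik / (pi * pk)) - Real.log (pkl / (pk * pl)) =
        Real.log x - Real.log y := by rw [e1, e2, e3]; linarith
    have : x * Real.log (pik / (pi * pk)) - x * Real.log (pkl / (pk * pl)) =
        x * (Real.log x - Real.log y) := by rw [← mul_sub, hlog]
    rw [this]
    nlinarith [hmul]

end helpers

/-- If `X_k` and `X_l` are conditionally independent given `X_i`, then
`I(X_i ; X_k) ≥ I(X_k ; X_l)`. -/
theorem mutualInfo_ge_of_condIndep
    {Ω A B C : Type*} [Fintype Ω] [Fintype A] [Fintype B] [Fintype C]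
    (w : Ω → ℝ) (hw0 : ∀ ω, 0 ≤ w ω) (hw1 : ∑ ω : Ω, w ω = 1)
    (Xi : Ω → A) (Xk : Ω → B) (Xl : Ω → C)
    (h : CondIndep w Xk Xl Xi) :
    mutualInfo w Xk Xl ≤ mutualInfo w Xi Xk := by
  classical
  -- abbreviations
  set x : A → B → C → ℝ :=
    fun a b c => pr w (fun ω => Xi ω = a ∧ Xk ω = b ∧ Xl ω = c) with hxdef
  set pik : A → B → ℝ := fun a b => pr w (fun ω => Xi ω = a ∧ Xk ω = b) with hpikdef
  set pkl : B → C → ℝ := fun b c => pr w (fun ω => Xk ω = b ∧ Xl ω = c) with hpkldef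
  set pil : A → C → ℝ := fun a c => pr w (fun ω => Xi ω = a ∧ Xl ω = c) with hpildef
  set pI : A → ℝ := fun a => pr w (fun ω => Xi ω = a) with hpIdef
  set pK : B → ℝ := fun b => pr w (fun ω => Xk ω = b) with hpKdef
  set pL : C → ℝ := fun c => pr w (fun ω => Xl ω = c) with hpLdef
  set y : A → B → C → ℝ := fun a b c => pil a c * pkl b c / pL c with hydef
  -- marginalization facts
  have hmik : ∀ a b, pik a b = ∑ c : C, x a b c := by
    intro a b
    show pr w (fun ω => Xi ω = a ∧ Xk ω = b) = _
    rw [pr_marg w (fun ω => Xi ω = a ∧ Xk ω = b) Xl]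
    exact Finset.sum_congr rfl fun c _ => pr_congr w (fun ω => by tauto)
  have hmkl : ∀ b c, pkl b c = ∑ a : A, x a b c := by
    intro b c
    show pr w (fun ω => Xk ω = b ∧ Xl ω = c) = _
    rw [pr_marg w (fun ω => Xk ω = b ∧ Xl ω = c) Xi]
    exact Finset.sum_congr rfl fun a _ => pr_congr w (fun ω => by tauto)
  have hmil : ∀ a, pI a = ∑ b : B, pik a b := by
    intro a
    exact pr_marg w (fun ω => Xi ω = a) Xk
  have hmil2 : ∀ a, pI a = ∑ c : C, pil a c := by
    intro a
    exact pr_marg w (fun ω => Xi ω = a) Xl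
  have hmlk : ∀ c, pL c = ∑ b : B, pkl b c := by
    intro c
    show pr w (fun ω => Xl ω = c) = _
    rw [pr_marg w (fun ω => Xl ω = c) Xk]
    exact Finset.sum_congr rfl fun b _ => pr_congr w (fun ω => by tauto)
  have hItot : ∑ a : A, pI a = 1 := by
    have h1 : pr w (fun _ : Ω => True) = ∑ a : A, pr w (fun ω => (True : Prop) ∧ Xi ω = a) :=
      pr_marg w _ Xi
    have h2 : pr w (fun _ : Ω => True) = 1 := by simpa [pr] using hw1
    show ∑ a : A, pr w (fun ω => Xi ω = a) = 1
    rw [← h2, h1]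
    exact Finset.sum_congr rfl fun a _ => pr_congr w (fun ω => by tauto)
  -- rewrite both mutual informations as triple sums
  have hRHS : mutualInfo w Xi Xk =
      ∑ a : A, ∑ b : B, ∑ c : C,
        x a b c * Real.log (pik a b / (pI a * pK b)) := by
    unfold mutualInfo
    refine Finset.sum_congr rfl fun a _ => Finset.sum_congr rfl fun b _ => ?_
    rw [show pr w (fun ω => Xi ω = a ∧ Xk ω = b) = pik a b from rfl,
      show pr w (fun ω => Xi ω = a) = pI a from rfl,
      show pr w (fun ω => Xk ω = b) = pK b from rfl, hmik a b, Finset.sum_mul, ← hmik a b]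
  have hLHS : mutualInfo w Xk Xl =
      ∑ a : A, ∑ b : B, ∑ c : C,
        x a b c * Real.log (pkl b c / (pK b * pL c)) := by
    unfold mutualInfo
    have step : ∀ b c, pr w (fun ω => Xk ω = b ∧ Xl ω = c) *
        Real.log (pr w (fun ω => Xk ω = b ∧ Xl ω = c) /
          (pr w (fun ω => Xk ω = b) * pr w (fun ω => Xl ω = c))) =
        ∑ a : A, x a b c * Real.log (pkl b c / (pK b * pL c)) := by
      intro b c
      rw [show pr w (fun ω => Xk ω = b ∧ Xl ω = c) = pkl b c from rfl,
        show pr w (fun ω => Xk ω = b) = pK b from rfl,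
        show pr w (fun ω => Xl ω = c) = pL c from rfl, hmkl b c, Finset.sum_mul, ← hmkl b c]
    calc ∑ b : B, ∑ c : C, pr w (fun ω => Xk ω = b ∧ Xl ω = c) *
          Real.log (pr w (fun ω => Xk ω = b ∧ Xl ω = c) /
            (pr w (fun ω => Xk ω = b) * pr w (fun ω => Xl ω = c)))
        = ∑ b : B, ∑ c : C, ∑ a : A, x a b c * Real.log (pkl b c / (pK b * pL c)) := by
          exact Finset.sum_congr rfl fun b _ => Finset.sum_congr rfl fun c _ => step b c
      _ = ∑ b : B, ∑ a : A, ∑ c : C, x a b c * Real.log (pkl b c / (pK b * pL c)) := by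
          exact Finset.sum_congr rfl fun b _ => Finset.sum_comm
      _ = ∑ a : A, ∑ b : B, ∑ c : C, x a b c * Real.log (pkl b c / (pK b * pL c)) :=
          Finset.sum_comm
  -- totals
  have hxsum : ∑ a : A, ∑ b : B, ∑ c : C, x a b c = 1 := by
    have : ∀ a, ∑ b : B, ∑ c : C, x a b c = pI a := by
      intro a
      rw [hmil a]
      exact Finset.sum_congr rfl fun b _ => (hmik a b).symm
    rw [Finset.sum_congr rfl fun a _ => this a, hItot]
  have hysum : ∑ a : A, ∑ b : B, ∑ c : C, y a b c ≤ 1 := by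
    have hbc : ∀ a c, ∑ b : B, y a b c ≤ pil a c := by
      intro a c
      have h1 : ∑ b : B, y a b c = ∑ b : B, pil a c / pL c * pkl b c :=
        Finset.sum_congr rfl fun b _ => by show pil a c * pkl b c / pL c = _; ring
      have h2 : ∑ b : B, y a b c = pil a c / pL c * pL c := by
        rw [h1, ← Finset.mul_sum, ← hmlk c]
      rw [h2]
      rcases eq_or_ne (pL c) 0 with hz | hz
      · rw [hz, mul_zero]; exact pr_nonneg w hw0 _
      · rw [div_mul_cancel₀ _ hz]
    calc ∑ a : A, ∑ b : B, ∑ c : C, y a b c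
        = ∑ a : A, ∑ c : C, ∑ b : B, y a b c :=
          Finset.sum_congr rfl fun a _ => Finset.sum_comm
      _ ≤ ∑ a : A, ∑ c : C, pil a c := by
          refine Finset.sum_le_sum fun a _ => Finset.sum_le_sum fun c _ => hbc a c
      _ = ∑ a : A, pI a := Finset.sum_congr rfl fun a _ => (hmil2 a).symm
      _ = 1 := hItot
  -- pointwise inequality
  have hterm : ∀ (a : A) (b : B) (c : C),
      x a b c - y a b c ≤
        x a b c * Real.log (pik a b / (pI a * pK b)) -
          x a b c * Real.log (pkl b c / (pK b * pL c)) := by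
    intro a b c
    have hci : x a b c * pI a = pik a b * pil a c := by
      have h0 := h b c a
      have e1 : pr w (fun ω => Xk ω = b ∧ Xl ω = c ∧ Xi ω = a) = x a b c :=
        pr_congr w (fun ω => by tauto)
      have e2 : pr w (fun ω => Xk ω = b ∧ Xi ω = a) = pik a b :=
        pr_congr w (fun ω => by tauto)
      have e3 : pr w (fun ω => Xl ω = c ∧ Xi ω = a) = pil a c :=
        pr_congr w (fun ω => by tauto)
      rw [e1, e2, e3] at h0
      exact h0
    refine key_ineq (x a b c) (pik a b) (pil a c) (pkl b c) (pI a) (pK b) (pL c)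
      (pr_nonneg w hw0 _)
      (pr_mono w hw0 fun ω hω => by tauto)
      (pr_mono w hw0 fun ω hω => by tauto)
      (pr_mono w hw0 fun ω hω => by tauto)
      (pr_mono w hw0 fun ω hω => by tauto)
      (pr_mono w hw0 fun ω hω => by tauto)
      (pr_mono w hw0 fun ω hω => by tauto)
      (pr_nonneg w hw0 _) (pr_nonneg w hw0 _) (pr_nonneg w hw0 _) hci
  -- combine
  rw [hLHS, hRHS]
  have hsum1 : ∑ a : A, ∑ b : B, ∑ c : C, (x a b c - y a b c) ≤
      ∑ a : A, ∑ b : B, ∑ c : C,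
        (x a b c * Real.log (pik a b / (pI a * pK b)) -
          x a b c * Real.log (pkl b c / (pK b * pL c))) := by
    refine Finset.sum_le_sum fun a _ => Finset.sum_le_sum fun b _ =>
      Finset.sum_le_sum fun c _ => hterm a b c
  have e1 : ∑ a : A, ∑ b : B, ∑ c : C, (x a b c - y a b c) =
      (∑ a : A, ∑ b : B, ∑ c : C, x a b c) -
        (∑ a : A, ∑ b : B, ∑ c : C, y a b c) := by
    simp [Finset.sum_sub_distrib]
  have e2 : ∑ a : A, ∑ b : B, ∑ c : C,
      (x a b c * Real.log (pik a b / (pI a * pK b)) -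
        x a b c * Real.log (pkl b c / (pK b * pL c))) =
      (∑ a : A, ∑ b : B, ∑ c : C, x a b c * Real.log (pik a b / (pI a * pK b))) -
        (∑ a : A, ∑ b : B, ∑ c : C, x a b c * Real.log (pkl b c / (pK b * pL c))) := by
    simp [Finset.sum_sub_distrib]
  rw [e1, e2] at hsum1
  linarith
end

section
/- Let Ω be a finite probability space, M ≥ 3, and X_1, …, X_M random variables taking values in finite types, with the joint probability strictly positive on the full product of value types. Let Θ : {2, …, M−1} → {1, …, M−1} be a parent assignment and let p₁, p₂ ∈ {1, …, M−1} be two distinct parents for node M. Define q(x) = P(X_1 = x_1) · ∏_{i=2}^{M−1} P(X_i = x_i ∣ X_{Θ(i)} = x_{Θ(i)}) · P(X_M = x_M ∣ X_{p₁} = x_{p₁}, X_{p₂} = x_{p₂}). Then the Kullback–Leibler divergence satisfies Σ_x P(X = x) log( P(X = x)/q(x) ) = Σ_{i=1}^{M} H(X_i) − H(X_1, …, X_M) − Σ_{i=2}^{M−1} I(X_i ; X_{Θ(i)}) − I(X_M ; (X_{p₁}, X_{p₂})). -/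
/-! Every quantity in the identity is an expectation of a log-probability: with
`p_Y(ω) = P(Y = Y ω)` one has `H(Y) = -E[log p_Y]` and `I(X;Y) = H(X) + H(Y) - H(X,Y)`.
At every atom `ω` of `w` the probabilities of events containing `ω` are positive, so the
logarithm of `q` splits into
`log p_{X_1} + ∑ (log p_{(X_i, X_Θ i)} - log p_{X_Θ i}) + log p_{(X_M, X_{p₁}, X_{p₂})}
  - log p_{(X_{p₁}, X_{p₂})}`.
Both sides thereby become the same linear combination of entropies of single nodes, of the
parent pairs, and of the joint law. -/

open scoped Classical

open Finset Real

lemma Finset.sum_univ_eq_add_add_sum_filter_ne {ι R : Type*} [Fintype ι] [AddCommMonoid R]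
    {a b : ι} (hab : a ≠ b) [DecidablePred fun i => i ≠ a ∧ i ≠ b] (f : ι → R) :
    ∑ i, f i = f a + f b + ∑ i ∈ univ.filter (fun i => i ≠ a ∧ i ≠ b), f i := by
  have hpair : univ.filter (fun i => ¬(i ≠ a ∧ i ≠ b)) = {a, b} := by
    ext i
    simp only [mem_filter, mem_univ, true_and, mem_insert, mem_singleton]
    tauto
  rw [← sum_filter_not_add_sum_filter univ (fun i => i ≠ a ∧ i ≠ b), hpair, sum_pair hab]

section

variable {Ω : Type*} [Fintype Ω] {w : Ω → ℝ}

lemma pr_eq_apply_ne_zero (hw0 : ∀ ω, 0 ≤ w ω) {B : Type*} {Y : Ω → B} {ω : Ω}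
    (hω : w ω ≠ 0) : pr w (fun ω' => Y ω' = Y ω) ≠ 0 := by
  have hle : w ω ≤ pr w (fun ω' => Y ω' = Y ω) := by
    simpa [pr] using single_le_sum (f := fun ω' => if Y ω' = Y ω then w ω' else 0)
      (fun ω' _ => by split_ifs <;> simp [hw0 ω']) (mem_univ ω)
  exact ((hw0 ω).lt_of_ne' hω).trans_le hle |>.ne'

lemma sum_pr_mul_eq_sum_mul_comp {B : Type*} [Fintype B] (Y : Ω → B) (g : B → ℝ) :
    ∑ b, pr w (fun ω => Y ω = b) * g b = ∑ ω, w ω * g (Y ω) := by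
  simp only [pr, sum_mul, ite_mul, zero_mul]
  rw [sum_comm]
  simp

lemma sum_mul_log_pr_eq_neg_entropy {B : Type*} [Fintype B] (Y : Ω → B) :
    ∑ ω, w ω * log (pr w (fun ω' => Y ω' = Y ω)) = -entropy w Y := by
  rw [entropy, sum_pr_mul_eq_sum_mul_comp Y (fun b => log (pr w fun ω => Y ω = b)), neg_neg]

lemma sum_mul_congr_of_ne_zero {f g : Ω → ℝ} (h : ∀ ω, w ω ≠ 0 → f ω = g ω) :
    ∑ ω, w ω * f ω = ∑ ω, w ω * g ω := by
  refine sum_congr rfl fun ω _ => ?_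
  rcases eq_or_ne (w ω) 0 with hω | hω
  · simp [hω]
  · rw [h ω hω]

lemma sum_mul_log_mul {f g : Ω → ℝ} (hf : ∀ ω, w ω ≠ 0 → f ω ≠ 0)
    (hg : ∀ ω, w ω ≠ 0 → g ω ≠ 0) :
    ∑ ω, w ω * log (f ω * g ω) = ∑ ω, w ω * log (f ω) + ∑ ω, w ω * log (g ω) := by
  rw [← sum_add_distrib]
  simp only [← mul_add]
  exact sum_mul_congr_of_ne_zero fun ω hω => log_mul (hf ω hω) (hg ω hω)

lemma sum_mul_log_div {f g : Ω → ℝ} (hf : ∀ ω, w ω ≠ 0 → f ω ≠ 0)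
    (hg : ∀ ω, w ω ≠ 0 → g ω ≠ 0) :
    ∑ ω, w ω * log (f ω / g ω) = ∑ ω, w ω * log (f ω) - ∑ ω, w ω * log (g ω) := by
  rw [← sum_sub_distrib]
  simp only [← mul_sub]
  exact sum_mul_congr_of_ne_zero fun ω hω => log_div (hf ω hω) (hg ω hω)

lemma sum_mul_log_prod {ι : Type*} (s : Finset ι) {f : ι → Ω → ℝ}
    (hf : ∀ i ∈ s, ∀ ω, w ω ≠ 0 → f i ω ≠ 0) :
    ∑ ω, w ω * log (∏ i ∈ s, f i ω) = ∑ i ∈ s, ∑ ω, w ω * log (f i ω) := by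
  rw [sum_comm]
  simp only [← mul_sum]
  exact sum_mul_congr_of_ne_zero fun ω hω => log_prod fun i hi => hf i hi ω hω

lemma sum_mul_log_pr_pair_div_pr (hw0 : ∀ ω, 0 ≤ w ω) {A B : Type*} [Fintype A] [Fintype B]
    (X : Ω → A) (Y : Ω → B) :
    ∑ ω, w ω *
        log (pr w (fun ω' => (X ω', Y ω') = (X ω, Y ω)) / pr w (fun ω' => Y ω' = Y ω))
      = entropy w Y - entropy w (fun ω => (X ω, Y ω)) := by
  rw [sum_mul_log_div (fun _ => pr_eq_apply_ne_zero hw0) (fun _ => pr_eq_apply_ne_zero hw0)]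
  simp only [sum_mul_log_pr_eq_neg_entropy]
  ring

lemma mutualInfo_eq_entropy_add_entropy_sub_entropy (hw0 : ∀ ω, 0 ≤ w ω)
    {A B : Type*} [Fintype A] [Fintype B] (X : Ω → A) (Y : Ω → B) :
    mutualInfo w X Y = entropy w X + entropy w Y - entropy w (fun ω => (X ω, Y ω)) := by
  rw [mutualInfo]
  simp only [← Prod.mk.injEq]
  rw [← Fintype.sum_prod_type', sum_pr_mul_eq_sum_mul_comp (fun ω => (X ω, Y ω)),
    sum_mul_log_div (fun _ => pr_eq_apply_ne_zero hw0)
      (fun _ hω => mul_ne_zero (pr_eq_apply_ne_zero hw0 hω) (pr_eq_apply_ne_zero hw0 hω)),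
    sum_mul_log_mul (fun _ => pr_eq_apply_ne_zero hw0) (fun _ => pr_eq_apply_ne_zero hw0)]
  simp only [sum_mul_log_pr_eq_neg_entropy]
  ring

end

/-- Weakly meshed tree approximation: the variables are indexed by `Fin M`
(index `0` plays the role of `X_1` and the last index `⟨M-1,_⟩` plays the role of `X_M`). Node
`M` has the two distinct parents `p₁, p₂` (both among the first `M−1` nodes), while every other
non-root node `i` has the single parent `Θ i` (also among the first `M−1` nodes). For a strictly
positive joint distribution, the KL divergence between the joint distribution and
`q(x) = P(X_0 = x_0) · ∏_{i ≠ 0, last} P(X_i = x_i ∣ X_{Θ i} = x_{Θ i})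
      · P(X_last = x_last ∣ X_{p₁} = x_{p₁}, X_{p₂} = x_{p₂})`
equals `∑_i H(X_i) − H(X_1,…,X_M) − ∑_{i ≠ 0, last} I(X_i ; X_{Θ i}) − I(X_last ; (X_{p₁}, X_{p₂}))`. -/
theorem kl_two_parent_tree_approximation_eq
    {Ω : Type*} [Fintype Ω] (w : Ω → ℝ)
    (hw0 : ∀ ω, 0 ≤ w ω)
    (M : ℕ) (hM : 3 ≤ M)
    (A : Fin M → Type*) [∀ i, Fintype (A i)]
    (X : ∀ i, Ω → A i)
    (Θ : Fin M → Fin M)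
    (p₁ p₂ : Fin M) :
    (∑ x : ∀ i, A i,
        pr w (fun ω => ∀ i, X i ω = x i) *
          Real.log (pr w (fun ω => ∀ i, X i ω = x i) /
            (pr w (fun ω => X ⟨0, by omega⟩ ω = x ⟨0, by omega⟩) *
              (∏ i ∈ Finset.univ.filter
                  (fun i : Fin M => i ≠ ⟨0, by omega⟩ ∧ i ≠ ⟨M - 1, by omega⟩),
                pr w (fun ω => X i ω = x i ∧ X (Θ i) ω = x (Θ i)) /
                  pr w (fun ω => X (Θ i) ω = x (Θ i))) *
              (pr w (fun ω => X ⟨M - 1, by omega⟩ ω = x ⟨M - 1, by omega⟩ ∧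
                    X p₁ ω = x p₁ ∧ X p₂ ω = x p₂) /
                pr w (fun ω => X p₁ ω = x p₁ ∧ X p₂ ω = x p₂)))))
      = (∑ i : Fin M, entropy w (X i)) - entropy w (fun ω => fun i => X i ω)
          - (∑ i ∈ Finset.univ.filter
                (fun i : Fin M => i ≠ ⟨0, by omega⟩ ∧ i ≠ ⟨M - 1, by omega⟩),
              mutualInfo w (X i) (X (Θ i)))
          - mutualInfo w (X ⟨M - 1, by omega⟩) (fun ω => (X p₁ ω, X p₂ ω)) := by
  have h0M : (⟨0, by omega⟩ : Fin M) ≠ ⟨M - 1, by omega⟩ := by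
    simp only [ne_eq, Fin.mk.injEq]
    omega
  -- turn each conjunction of events `X_j = x_j` into one event about the tuple of the `X_j`
  simp only [← Prod.mk.injEq, ← funext_iff]
  rw [sum_pr_mul_eq_sum_mul_comp (fun ω i => X i ω), sum_mul_log_div, sum_mul_log_mul,
    sum_mul_log_mul, sum_mul_log_prod]
  all_goals beta_reduce
  · simp only [sum_mul_log_pr_pair_div_pr hw0, sum_mul_log_pr_eq_neg_entropy,
      mutualInfo_eq_entropy_add_entropy_sub_entropy hw0,
      Finset.sum_univ_eq_add_add_sum_filter_ne h0M, sum_sub_distrib, sum_add_distrib]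
    ring
  -- every factor of `q` is a probability `P(Y = Y ω)`, hence nonzero at an atom `ω`
  all_goals
    intros
    repeat' first
      | apply div_ne_zero
      | apply mul_ne_zero
      | refine prod_ne_zero_iff.mpr fun _ _ => ?_
    all_goals exact pr_eq_apply_ne_zero hw0 ‹_›
end
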